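/- Finite identity equivalent to Jackson's ₂φ₁-to-₂φ₂ transformation: for integers m, n ≥ 0 and complex b, q with (b;q)_{m+n+1} ≠ 0, Σ_{k=0}^{n} (-1)^{n-k} [n k]_q q^{binom(k,2)} / (b q^{n-k};q)_{m+1} = [m+n, m]_q · b^n q^{binom(n,2)} (q;q)_n / (b;q)_{m+n+1}. -/

import Mathlib

/-!
Both sides, viewed as functions `f n b`, satisfy `f (n+1) b = q^n f n b - f n (bq)` and agree
at `n = 0`, where they equal `1 / (b;q)_{m+1}`. For the sum this is the `q`-Pascal rule
`[n+1, k+1] = [n, k+1] + q^{n-k} [n, k]`; for the closed form it is the partial fraction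
`1/(1-b) - 1/(1-bq^{m+n+1}) = b(1-q^{m+n+1}) / ((1-b)(1-bq^{m+n+1}))`.
-/

noncomputable def qpoch (a q : ℂ) (n : ℕ) : ℂ := ∏ i ∈ Finset.range n, (1 - a * q ^ i)

noncomputable def qbinom (q : ℂ) (n k : ℕ) : ℂ :=
  qpoch q q n / (qpoch q q k * qpoch q q (n - k))

open Finset

section QPochhammer

variable {a q : ℂ} {n : ℕ}

@[simp]
lemma qpoch_zero (a q : ℂ) : qpoch a q 0 = 1 := prod_range_zero _

lemma qpoch_succ (a q : ℂ) (n : ℕ) : qpoch a q (n + 1) = qpoch a q n * (1 - a * q ^ n) :=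
  prod_range_succ _ _

lemma qpoch_succ' (a q : ℂ) (n : ℕ) : qpoch a q (n + 1) = (1 - a) * qpoch (a * q) q n := by
  rw [qpoch, prod_range_succ', qpoch, pow_zero, mul_one, mul_comm]
  congr 1
  exact prod_congr rfl fun i _ => by ring

lemma qpoch_ne_zero_iff : qpoch a q n ≠ 0 ↔ ∀ i < n, 1 - a * q ^ i ≠ 0 := by
  simp [qpoch, prod_ne_zero_iff]

lemma qpoch_ne_zero_of_le {i : ℕ} (h : qpoch a q n ≠ 0) (hi : i ≤ n) : qpoch a q i ≠ 0 :=
  qpoch_ne_zero_iff.2 fun j hj => qpoch_ne_zero_iff.1 h j (by omega)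

lemma one_sub_mul_pow_ne_zero (h : qpoch a q (n + 1) ≠ 0) : 1 - a * q ^ n ≠ 0 :=
  qpoch_ne_zero_iff.1 h n n.lt_succ_self

end QPochhammer

section QBinomial

variable {q : ℂ} {n : ℕ}

@[simp]
lemma qbinom_zero_zero (q : ℂ) : qbinom q 0 0 = 1 := by simp [qbinom]

lemma qbinom_zero_right (h : qpoch q q n ≠ 0) : qbinom q n 0 = 1 := by
  rw [qbinom, Nat.sub_zero, qpoch_zero, one_mul, div_self h]

lemma qbinom_self (h : qpoch q q n ≠ 0) : qbinom q n n = 1 := by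
  rw [qbinom, Nat.sub_self, qpoch_zero, mul_one, div_self h]

lemma qbinom_succ_succ {k : ℕ} (h : qpoch q q (n + 1) ≠ 0) (hk : k < n) :
    qbinom q (n + 1) (k + 1) = qbinom q n (k + 1) + q ^ (n - k) * qbinom q n k := by
  obtain ⟨j, rfl⟩ : ∃ j, n = k + 1 + j := ⟨n - (k + 1), by omega⟩
  have hk : qpoch q q (k + 1) ≠ 0 := qpoch_ne_zero_of_le h (by omega)
  have hj : qpoch q q (j + 1) ≠ 0 := qpoch_ne_zero_of_le h (by omega)
  rw [qpoch_succ, mul_ne_zero_iff] at hk hj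
  obtain ⟨hk₀, hk₁⟩ := hk
  obtain ⟨hj₀, hj₁⟩ := hj
  rw [qbinom, qbinom, qbinom, show k + 1 + j + 1 - (k + 1) = j + 1 by omega,
    show k + 1 + j - (k + 1) = j by omega, show k + 1 + j - k = j + 1 by omega,
    qpoch_succ q q (k + 1 + j), qpoch_succ q q k, qpoch_succ q q j]
  field_simp
  ring

lemma qbinom_add_left_mul_qpoch (m : ℕ) (h : qpoch q q n ≠ 0) :
    qbinom q (m + n) m * qpoch q q n = qpoch q q (m + n) / qpoch q q m := by
  rw [qbinom, Nat.add_sub_cancel_left]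
  field_simp

end QBinomial

lemma triangular_succ (k : ℕ) : (k + 1) * (k + 1 - 1) / 2 = k * (k - 1) / 2 + k := by
  simp only [← Nat.choose_two_right, Nat.choose_succ_succ', Nat.choose_one_right]
  ring

section Jackson

variable (q : ℂ) (m : ℕ)

noncomputable def jacksonTerm (b : ℂ) (n k : ℕ) : ℂ :=
  (-1) ^ (n - k) * qbinom q n k * q ^ (k * (k - 1) / 2) * (1 / qpoch (b * q ^ (n - k)) q (m + 1))

noncomputable def jacksonSum (b : ℂ) (n : ℕ) : ℂ :=
  ∑ k ∈ range (n + 1), jacksonTerm q m b n k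

/-- The right-hand side, with `[m+n, m]_q (q;q)_n` written as `(q;q)_{m+n} / (q;q)_m`. -/
noncomputable def jacksonClosedForm (b : ℂ) (n : ℕ) : ℂ :=
  qpoch q q (m + n) / qpoch q q m * b ^ n * q ^ (n * (n - 1) / 2) / qpoch b q (m + n + 1)

variable {q} {b : ℂ} {n : ℕ}

lemma jacksonTerm_succ_zero (h : qpoch q q (n + 1) ≠ 0) :
    jacksonTerm q m b (n + 1) 0 = -jacksonTerm q m (b * q) n 0 := by
  rw [jacksonTerm, jacksonTerm, qbinom_zero_right h,
    qbinom_zero_right (qpoch_ne_zero_of_le h n.le_succ), Nat.sub_zero, Nat.sub_zero, pow_succ q n,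
    ← mul_assoc, mul_right_comm b]
  ring

lemma jacksonTerm_succ_self (h : qpoch q q (n + 1) ≠ 0) :
    jacksonTerm q m b (n + 1) (n + 1) = q ^ n * jacksonTerm q m b n n := by
  rw [jacksonTerm, jacksonTerm, qbinom_self h, qbinom_self (qpoch_ne_zero_of_le h n.le_succ),
    Nat.sub_self, Nat.sub_self, triangular_succ, pow_add]
  ring

lemma jacksonTerm_succ_succ {k : ℕ} (h : qpoch q q (n + 1) ≠ 0) (hk : k < n) :
    jacksonTerm q m b (n + 1) (k + 1) =
      -jacksonTerm q m (b * q) n (k + 1) + q ^ n * jacksonTerm q m b n k := by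
  obtain ⟨j, rfl⟩ : ∃ j, n = k + 1 + j := ⟨n - (k + 1), by omega⟩
  rw [jacksonTerm, jacksonTerm, jacksonTerm, qbinom_succ_succ h hk, triangular_succ,
    show k + 1 + j + 1 - (k + 1) = j + 1 by omega, show k + 1 + j - (k + 1) = j by omega,
    show k + 1 + j - k = j + 1 by omega, pow_succ q j, ← mul_assoc, mul_right_comm b]
  ring

lemma jacksonSum_succ (h : qpoch q q (n + 1) ≠ 0) :
    jacksonSum q m b (n + 1) = q ^ n * jacksonSum q m b n - jacksonSum q m (b * q) n := by
  have hpeel : jacksonSum q m b (n + 1) = jacksonTerm q m b (n + 1) 0 +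
      ∑ k ∈ range n, jacksonTerm q m b (n + 1) (k + 1) + jacksonTerm q m b (n + 1) (n + 1) := by
    rw [jacksonSum, sum_range_succ, sum_range_succ', add_comm _ (jacksonTerm _ _ _ _ 0)]
  rw [hpeel, jacksonTerm_succ_zero m h, jacksonTerm_succ_self m h,
    sum_congr rfl fun k hk => jacksonTerm_succ_succ m h (mem_range.1 hk), sum_add_distrib,
    sum_neg_distrib, ← mul_sum, jacksonSum, jacksonSum, sum_range_succ, sum_range_succ']
  ring

lemma jacksonClosedForm_succ (h : qpoch b q (m + n + 2) ≠ 0) :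
    jacksonClosedForm q m b (n + 1) =
      q ^ n * jacksonClosedForm q m b n - jacksonClosedForm q m (b * q) n := by
  rw [qpoch_succ'] at h
  obtain ⟨hb₀, hbq⟩ := mul_ne_zero_iff.1 h
  have hbq₀ := qpoch_ne_zero_of_le hbq (m + n).le_succ
  have hbq₁ : 1 - q * q ^ (m + n) * b ≠ 0 := by
    convert one_sub_mul_pow_ne_zero hbq using 2; ring
  rw [jacksonClosedForm, jacksonClosedForm, jacksonClosedForm, ← add_assoc,
    qpoch_succ' b q (m + n + 1), qpoch_succ' b q (m + n), qpoch_succ (b * q),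
    qpoch_succ q q (m + n), triangular_succ, mul_div_right_comm (qpoch q q (m + n))]
  -- `(q;q)_m` may vanish, so its quotient is kept as an opaque factor for `field_simp`.
  generalize qpoch q q (m + n) / qpoch q q m = c
  field_simp
  ring

theorem jacksonSum_eq_closedForm (hq : qpoch q q (m + n) ≠ 0) (hb : qpoch b q (m + n + 1) ≠ 0) :
    jacksonSum q m b n = jacksonClosedForm q m b n := by
  induction n generalizing b with
  | zero =>
    rw [add_zero] at hq
    simp [jacksonSum, jacksonTerm, jacksonClosedForm, div_self hq]
  | succ n ih =>
    have hq' : qpoch q q (m + n) ≠ 0 := qpoch_ne_zero_of_le hq (by omega)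
    have hbq : qpoch (b * q) q (m + n + 1) ≠ 0 := by
      rw [← add_assoc, qpoch_succ'] at hb
      exact right_ne_zero_of_mul hb
    rw [jacksonSum_succ m (qpoch_ne_zero_of_le hq (by omega)), jacksonClosedForm_succ m hb,
      ih hq' (qpoch_ne_zero_of_le hb (by omega)), ih hq' hbq]

end Jackson

theorem jackson_transformation_finite_form (q b : ℂ) (m n : ℕ)
    (hb : ∀ i ≤ m + n, 1 - b * q ^ i ≠ 0)
    (hpoch : ∀ k ≤ m + n + 1, qpoch q q k ≠ 0) :
    ∑ k ∈ Finset.range (n + 1),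
        (-1) ^ (n - k) * qbinom q n k * q ^ (k * (k - 1) / 2) *
          (1 / qpoch (b * q ^ (n - k)) q (m + 1)) =
      qbinom q (m + n) m * b ^ n * q ^ (n * (n - 1) / 2) * qpoch q q n /
        qpoch b q (m + n + 1) := by
  have hbq : qpoch b q (m + n + 1) ≠ 0 := qpoch_ne_zero_iff.2 fun i hi => hb i (by omega)
  calc _ = jacksonSum q m b n := rfl
    _ = jacksonClosedForm q m b n := jacksonSum_eq_closedForm m (hpoch (m + n) (by omega)) hbq
    _ = _ := by
      rw [jacksonClosedForm, ← qbinom_add_left_mul_qpoch m (hpoch n (by omega))]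
      ring
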